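/- Let n ≥ 1 and let A be an n×n real sub-generator matrix. Then for every μ > 0 the matrix μI − A is invertible and every entry of (μI − A)⁻¹ is nonnegative. -/
import Mathlib


open Matrix

attribute [local instance] Matrix.linftyOpNormedAddCommGroup Matrix.linftyOpNormedRing
  Matrix.linftyOpNormedSpace

/-- **Resolvent positivity for sub-generator matrices.**
If `A` is an `n × n` real sub-generator matrix (off-diagonal entries nonnegative,
row sums nonpositive), then for every `μ > 0` the matrix `μI − A` is invertible
and every entry of `(μI − A)⁻¹` is nonnegative. -/
theorem subGenerator_resolvent_isUnit_and_inv_nonneg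
    (n : ℕ) (hn : 1 ≤ n) (A : Matrix (Fin n) (Fin n) ℝ)
    (hoff : ∀ i j, i ≠ j → 0 ≤ A i j)
    (hrow : ∀ i, ∑ j, A i j ≤ 0)
    (μ : ℝ) (hμ : 0 < μ) :
    IsUnit (μ • (1 : Matrix (Fin n) (Fin n) ℝ) - A) ∧
      ∀ i j, 0 ≤ ((μ • (1 : Matrix (Fin n) (Fin n) ℝ) - A)⁻¹) i j := by
  set c : ℝ := ∑ i, |A i i| with hc_def
  have hc : 0 ≤ c := Finset.sum_nonneg fun i _ => abs_nonneg _
  have hμc : 0 < μ + c := by linarith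
  have hμc' : (μ + c) ≠ 0 := ne_of_gt hμc
  set t : Matrix (Fin n) (Fin n) ℝ := (μ + c)⁻¹ • (c • (1 : Matrix (Fin n) (Fin n) ℝ) + A)
    with ht_def
  have hdiag : ∀ i : Fin n, 0 ≤ c + A i i := by
    intro i
    have h1 : |A i i| ≤ c := Finset.single_le_sum (f := fun i => |A i i|)
      (fun i _ => abs_nonneg _) (Finset.mem_univ i)
    have := neg_abs_le (A i i)
    linarith
  have ht_entry : ∀ i j, t i j = (μ + c)⁻¹ * (c * (1 : Matrix (Fin n) (Fin n) ℝ) i j + A i j) := by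
    intro i j; simp [ht_def, Matrix.smul_apply, Matrix.add_apply]; ring
  have ht_nonneg : ∀ i j, 0 ≤ t i j := by
    intro i j
    rw [ht_entry]
    rcases eq_or_ne i j with rfl | hij
    · simp only [Matrix.one_apply_eq, mul_one]
      exact mul_nonneg (inv_nonneg.2 hμc.le) (hdiag i)
    · rw [Matrix.one_apply_ne hij, mul_zero, zero_add]
      exact mul_nonneg (inv_nonneg.2 hμc.le) (hoff i j hij)
  have hrowt : ∀ i, ∑ j, t i j ≤ c / (μ + c) := by
    intro i
    have hone : ∑ j, (1 : Matrix (Fin n) (Fin n) ℝ) i j = 1 := by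
      simp [Matrix.one_apply]
    calc ∑ j, t i j = (μ + c)⁻¹ * (c * ∑ j, (1 : Matrix (Fin n) (Fin n) ℝ) i j + ∑ j, A i j) := by
          simp_rw [ht_entry]
          rw [← Finset.mul_sum, Finset.sum_add_distrib, ← Finset.mul_sum]
      _ = (μ + c)⁻¹ * (c + ∑ j, A i j) := by rw [hone, mul_one]
      _ ≤ (μ + c)⁻¹ * c := by
          apply mul_le_mul_of_nonneg_left _ (inv_nonneg.2 hμc.le)
          linarith [hrow i]
      _ = c / (μ + c) := by rw [div_eq_inv_mul]
  have htnorm : ‖t‖ < 1 := by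
    have h1 : ‖t‖₊ < 1 := by
      rw [Matrix.linfty_opNNNorm_def]
      refine (Finset.sup_lt_iff (by norm_num : (0 : NNReal) < 1)).2 fun i _ => ?_
      rw [← NNReal.coe_lt_coe]
      push_cast
      have : ∑ j, ‖t i j‖ = ∑ j, t i j :=
        Finset.sum_congr rfl fun j _ => Real.norm_of_nonneg (ht_nonneg i j)
      rw [this]
      refine lt_of_le_of_lt (hrowt i) ?_
      rw [div_lt_one hμc]; linarith
    exact_mod_cast h1
  set M : Matrix (Fin n) (Fin n) ℝ := μ • (1 : Matrix (Fin n) (Fin n) ℝ) - A with hM_def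
  have hM : M = (μ + c) • ((1 : Matrix (Fin n) (Fin n) ℝ) - t) := by
    rw [hM_def, ht_def, smul_sub, smul_smul, mul_inv_cancel₀ hμc', one_smul]
    module
  have hS : ((1 : Matrix (Fin n) (Fin n) ℝ) - t) * (∑' k : ℕ, t ^ k) = 1 :=
    mul_neg_geom_series t htnorm
  have hunit1 : IsUnit ((1 : Matrix (Fin n) (Fin n) ℝ) - t) :=
    isUnit_one_sub_of_norm_lt_one htnorm
  constructor
  · rw [hM, Matrix.isUnit_iff_isUnit_det, Matrix.det_smul]
    exact (isUnit_iff_ne_zero.2 (pow_ne_zero _ hμc')).mul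
      ((Matrix.isUnit_iff_isUnit_det _).1 hunit1)
  · have hinv : M⁻¹ = (μ + c)⁻¹ • ∑' k : ℕ, t ^ k := by
      apply Matrix.inv_eq_right_inv
      rw [hM, smul_mul_assoc, mul_smul_comm, smul_smul, mul_inv_cancel₀ hμc', one_smul, hS]
    have hpow : ∀ (k : ℕ) (i j : Fin n), 0 ≤ (t ^ k) i j := by
      intro k
      induction k with
      | zero =>
          intro i j
          rw [pow_zero]
          rcases eq_or_ne i j with rfl | hij
          · simp [Matrix.one_apply_eq]
          · simp [Matrix.one_apply_ne hij]
      | succ k ih =>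
          intro i j
          rw [pow_succ, Matrix.mul_apply]
          exact Finset.sum_nonneg fun l _ => mul_nonneg (ih i l) (ht_nonneg l j)
    have hsummable : Summable (fun k : ℕ => t ^ k) := summable_geometric_of_norm_lt_one htnorm
    intro i j
    rw [hinv, Matrix.smul_apply, smul_eq_mul]
    apply mul_nonneg (inv_nonneg.2 hμc.le)
    let E : Matrix (Fin n) (Fin n) ℝ →ₗ[ℝ] ℝ :=
      { toFun := fun M => M i j
        map_add' := fun x y => rfl
        map_smul' := fun r x => rfl }
    have hE : Continuous E := E.continuous_of_finiteDimensional
    have hmap := (hsummable.hasSum.map E hE).tsum_eq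
    show 0 ≤ E (∑' k : ℕ, t ^ k)
    rw [← hmap]
    exact tsum_nonneg fun k => hpow k i j
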